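/- arXiv:1211.1004 — 2 statements merged into one kernel-verified Lean document; each statement's English description precedes it below -/
import Mathlib

section
/- Over a Q-algebra B, the formal logarithm of the product over nonzero multi-indices I of (1 - a_I t^I) equals the sum over nonzero multi-indices I of w_I(a) * (-t^I / gcd(I)), where w_I(a) = sum over factorizations k*J = I (k a positive integer, J a nonzero multi-index) of gcd(J) * a_J^k, and gcd(J) denotes the greatest common divisor of the nonzero entries of J. -/
open Finset

/-- The infinite product `∏_{I ≠ 0} (1 - a_I t^I)`, defined coefficientwise via the
finite partial products. -/
noncomputable def wittFactorProd {n : ℕ} {B : Type*} [CommRing B]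
    (a : (Fin n →₀ ℕ) → B) : MvPowerSeries (Fin n) B :=
  fun M => MvPowerSeries.coeff M
    (∏ I ∈ (Finset.Iic M).erase 0, (1 - MvPowerSeries.monomial I (a I)))

/-- The greatest common divisor of the nonzero entries of a multi-index (equivalently,
the gcd of all of its entries). -/
def mgcd {n : ℕ} (I : Fin n →₀ ℕ) : ℕ := Finset.univ.gcd fun i => I i

/-- The ghost component `w_I(a) = ∑_{k J = I, k ≥ 1} gcd(J) a_J^k`. -/
noncomputable def ghostMap {n : ℕ} {B : Type*} [CommRing B]
    (a : (Fin n →₀ ℕ) → B) (I : Fin n →₀ ℕ) : B :=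
  ∑ p ∈ ((Finset.Icc 1 (I.sum fun _ m => m)) ×ˢ Finset.Iic I).filter
      (fun p => p.1 • p.2 = I),
    (mgcd p.2 : B) * a p.2 ^ p.1

/-- The formal logarithm `log f = ∑_{k ≥ 1} (-1)^(k+1) (f-1)^k / k`, defined
coefficientwise (in degree `M` only the terms with `k ≤ |M|` contribute, for `f` with
constant term `1`). -/
noncomputable def mvLog {n : ℕ} {B : Type*} [CommRing B] [Algebra ℚ B]
    (f : MvPowerSeries (Fin n) B) : MvPowerSeries (Fin n) B :=
  fun M => ∑ k ∈ Finset.Icc 1 (M.sum fun _ m => m),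
    (((-1 : ℚ) ^ (k + 1)) / k) • MvPowerSeries.coeff M ((f - 1) ^ k)

/-!
Write `truncLog N x = ∑_{k=1}^{N} (-1)^(k+1) x^k / k`. The coefficient of `t^M` in `mvLog f` is
that of `truncLog |M| (f - 1)`, so everything may be computed modulo the ideal of power series
without terms of total degree `≤ |M|`. Modulo that ideal `truncLog` turns products of series
`1 + u`, `u(0) = 0`, into sums: the Euler derivation `E = ∑ tᵢ ∂ᵢ` satisfies
`(1 + u) E (truncLog N u) ≡ E u`, i.e. `E log(1 + u) = E(1 + u) / (1 + u)`, so `E` kills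
`truncLog N ((1 + u)(1 + v) - 1) - truncLog N u - truncLog N v` up to degree `N`; since `E`
multiplies the coefficient of `t^d` by `|d|`, which is invertible over `ℚ` for `d ≠ 0`, that
difference vanishes up to degree `N` itself.

Below `M` the infinite product agrees with the finite product of the factors `1 - a_I t^I`,
`0 ≠ I ≤ M`, so its logarithm is `∑_I ∑_k -a_I^k t^{kI} / k`; grouping the terms with
`kJ = M` and using `gcd(kJ) = k gcd(J)` gives the ghost components.
-/

section TruncLog

variable {A A' : Type*} [CommRing A] [Algebra ℚ A] [CommRing A'] [Algebra ℚ A']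

noncomputable def truncLog (N : ℕ) (x : A) : A :=
  ∑ k ∈ Icc 1 N, ((-1 : ℚ) ^ (k + 1) / k) • x ^ k

theorem map_truncLog {F : Type*} [FunLike F A A'] [RingHomClass F A A'] (φ : F) (N : ℕ)
    (x : A) : φ (truncLog N x) = truncLog N (φ x) := by
  simp only [truncLog, map_sum, map_rat_smul, map_pow]

theorem truncLog_zero (N : ℕ) : truncLog N (0 : A) = 0 :=
  sum_eq_zero fun k hk => by
    rw [zero_pow (Nat.one_le_iff_ne_zero.mp (mem_Icc.mp hk).1), smul_zero]

theorem SModEq.truncLog {I : Ideal A} {x y : A} (h : x ≡ y [SMOD I]) (N : ℕ) :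
    _root_.truncLog N x ≡ _root_.truncLog N y [SMOD I] := by
  rw [SModEq.idealQuotientMk, map_truncLog, map_truncLog, SModEq.idealQuotientMk.mp h]

end TruncLog

namespace MvPowerSeries

variable {σ R : Type*} [CommRing R]

def coeffVanishingIdeal (s : LowerSet (σ →₀ ℕ)) : Ideal (MvPowerSeries σ R) where
  carrier := {f | ∀ d ∈ s, coeff d f = 0}
  zero_mem' _ _ := map_zero _
  add_mem' hf hg d hd := by rw [map_add, hf d hd, hg d hd, add_zero]
  smul_mem' g f hf d hd := by
    classical
    rw [smul_eq_mul, coeff_mul]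
    refine sum_eq_zero fun pq hpq => ?_
    rw [hf pq.2 (s.lower (HasAntidiagonal.antidiagonal.snd_le hpq) hd), mul_zero]

theorem coeff_eq_of_sModEq {s : LowerSet (σ →₀ ℕ)} {f g : MvPowerSeries σ R}
    (h : f ≡ g [SMOD coeffVanishingIdeal s]) {d : σ →₀ ℕ} (hd : d ∈ s) :
    coeff d f = coeff d g :=
  sub_eq_zero.mp (by rw [← map_sub]; exact SModEq.sub_mem.mp h d hd)

def degreeLE (N : ℕ) : LowerSet (σ →₀ ℕ) :=
  ⟨{d | d.degree ≤ N}, fun _ _ hle h => (Finsupp.degree_mono hle).trans h⟩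

theorem mem_degreeLE {N : ℕ} {d : σ →₀ ℕ} : d ∈ degreeLE N ↔ d.degree ≤ N := Iff.rfl

theorem mem_coeffVanishingIdeal_degreeLE {N : ℕ} {f : MvPowerSeries σ R} (h : N < f.order) :
    f ∈ coeffVanishingIdeal (degreeLE N) := fun _ hd =>
  coeff_of_lt_order ((Nat.cast_le.mpr hd).trans_lt h)

theorem one_sub_monomial_sModEq_one {I J : σ →₀ ℕ} (h : ¬I ≤ J) (c : R) :
    1 - monomial I c ≡ 1 [SMOD coeffVanishingIdeal (LowerSet.Iic J)] := by
  classical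
  rw [SModEq.sub_mem, sub_sub_cancel_left]
  refine neg_mem fun d hd => ?_
  rw [coeff_monomial, if_neg fun (hdI : d = I) => h (hdI ▸ LowerSet.mem_Iic_iff.mp hd)]

noncomputable def eulerDeriv : Derivation R (MvPowerSeries σ R) (MvPowerSeries σ R) :=
  Derivation.mk'
    { toFun := fun f d => d.degree * coeff d f
      map_add' := fun f g => funext fun d => by simp only [map_add, mul_add]; rfl
      map_smul' := fun c f => funext fun d => by
        simp only [map_smul, smul_eq_mul, RingHom.id_apply]; exact mul_left_comm _ _ _ }
    fun f g => by
      classical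
      ext d
      change (d.degree : R) * coeff d (f * g) =
        coeff d (f * show MvPowerSeries σ R from fun e => e.degree * coeff e g) +
          coeff d (g * show MvPowerSeries σ R from fun e => e.degree * coeff e f)
      rw [mul_comm g, coeff_mul, coeff_mul, coeff_mul, mul_sum, ← sum_add_distrib]
      refine sum_congr rfl fun pq hpq => ?_
      rw [← HasAntidiagonal.mem_antidiagonal.mp hpq, map_add, Nat.cast_add]
      change _ = coeff pq.1 f * (pq.2.degree * coeff pq.2 g) +
        pq.1.degree * coeff pq.1 f * coeff pq.2 g
      ring

theorem coeff_eulerDeriv (f : MvPowerSeries σ R) (d : σ →₀ ℕ) :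
    coeff d (eulerDeriv f) = d.degree * coeff d f := rfl

theorem constantCoeff_eulerDeriv (f : MvPowerSeries σ R) : constantCoeff (eulerDeriv f) = 0 := by
  rw [← coeff_zero_eq_constantCoeff_apply, coeff_eulerDeriv, map_zero, Nat.cast_zero, zero_mul]

section RatAlgebra

variable [Algebra ℚ R]

theorem constantCoeff_truncLog {u : MvPowerSeries σ R} (hu : constantCoeff u = 0) (N : ℕ) :
    constantCoeff (truncLog N u) = 0 := by
  rw [map_truncLog, hu, truncLog_zero]

theorem eulerDeriv_truncLog (N : ℕ) (u : MvPowerSeries σ R) :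
    eulerDeriv (truncLog N u) = (∑ j ∈ range N, (-u) ^ j) * eulerDeriv u := by
  rw [truncLog, map_sum, sum_mul, ← Ico_add_one_right_eq_Icc, sum_Ico_eq_sum_range,
    Nat.add_sub_cancel]
  refine sum_congr rfl fun j _ => ?_
  have hcoeff : (-1 : ℚ) ^ (1 + j + 1) / ↑(1 + j) * ↑(1 + j) = (-1) ^ j := by
    field_simp
    ring
  rw [map_rat_smul, Derivation.leibniz_pow, add_tsub_cancel_left, ← Nat.cast_smul_eq_nsmul ℚ,
    smul_smul, hcoeff, smul_eq_mul, Algebra.smul_def, map_pow, map_neg, map_one, neg_pow u,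
    mul_assoc]

theorem one_add_mul_eulerDeriv_truncLog_sModEq {u : MvPowerSeries σ R}
    (hu : constantCoeff u = 0) (N : ℕ) :
    (1 + u) * eulerDeriv (truncLog N u) ≡ eulerDeriv u
      [SMOD coeffVanishingIdeal (degreeLE N)] := by
  have hgeom : (1 + u) * eulerDeriv (truncLog N u) = eulerDeriv u - (-u) ^ N * eulerDeriv u := by
    have := geom_sum_mul_neg (-u) N
    rw [sub_neg_eq_add] at this
    rw [eulerDeriv_truncLog]
    linear_combination eulerDeriv u * this
  have hord : (N : ℕ∞) < ((-u) ^ N * eulerDeriv u).order :=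
    calc (N : ℕ∞) < N + 1 := by exact_mod_cast N.lt_succ_self
      _ ≤ ((-u) ^ N).order + (eulerDeriv u).order :=
        add_le_add (le_order_pow_of_constantCoeff_eq_zero N (by rw [map_neg, hu, neg_zero]))
          (one_le_order_iff_constCoeff_eq_zero.mpr (constantCoeff_eulerDeriv u))
      _ ≤ _ := le_order_mul
  rw [hgeom, SModEq.sub_mem, sub_sub_cancel_left]
  exact neg_mem (mem_coeffVanishingIdeal_degreeLE hord)

theorem mem_coeffVanishingIdeal_degreeLE_of_eulerDeriv_mem {N : ℕ} {f : MvPowerSeries σ R}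
    (hf : constantCoeff f = 0) (h : eulerDeriv f ∈ coeffVanishingIdeal (degreeLE N)) :
    f ∈ coeffVanishingIdeal (degreeLE N) := by
  intro d hd
  by_cases hd0 : d = 0
  · rw [hd0, coeff_zero_eq_constantCoeff_apply, hf]
  have hdeg : (d.degree : ℚ) ≠ 0 :=
    Nat.cast_ne_zero.mpr ((Finsupp.degree_eq_zero_iff d).not.mpr hd0)
  have hEd := h d hd
  rw [coeff_eulerDeriv, ← nsmul_eq_mul, ← Nat.cast_smul_eq_nsmul ℚ] at hEd
  exact (smul_eq_zero.mp hEd).resolve_left hdeg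

theorem truncLog_add_add_mul_sModEq {u v : MvPowerSeries σ R} (hu : constantCoeff u = 0)
    (hv : constantCoeff v = 0) (N : ℕ) :
    truncLog N (u + v + u * v) ≡ truncLog N u + truncLog N v
      [SMOD coeffVanishingIdeal (degreeLE N)] := by
  set w := u + v + u * v
  have hw : constantCoeff w = 0 := by simp [w, hu, hv]
  have hprod : 1 + w = (1 + u) * (1 + v) := by ring
  have hunit : IsUnit (1 + w) := isUnit_iff_constantCoeff.mpr (by simp [hw])
  refine SModEq.sub_mem.mpr (mem_coeffVanishingIdeal_degreeLE_of_eulerDeriv_mem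
    (by simp [constantCoeff_truncLog, hu, hv, hw]) ?_)
  rw [← Ideal.unit_mul_mem_iff_mem _ hunit, ← SModEq.zero]
  calc (1 + w) * eulerDeriv (truncLog N w - (truncLog N u + truncLog N v))
      = (1 + w) * eulerDeriv (truncLog N w) - (1 + v) * ((1 + u) * eulerDeriv (truncLog N u)) -
          (1 + u) * ((1 + v) * eulerDeriv (truncLog N v)) := by
        rw [map_sub, map_add, hprod]; ring
    _ ≡ eulerDeriv w - (1 + v) * eulerDeriv u - (1 + u) * eulerDeriv v
          [SMOD coeffVanishingIdeal (degreeLE N)] :=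
        ((one_add_mul_eulerDeriv_truncLog_sModEq hw N).sub
          (SModEq.rfl.mul (one_add_mul_eulerDeriv_truncLog_sModEq hu N))).sub
          (SModEq.rfl.mul (one_add_mul_eulerDeriv_truncLog_sModEq hv N))
    _ = 0 := by
        simp only [w, map_add, Derivation.leibniz, smul_eq_mul]
        ring

theorem truncLog_prod_one_add_sub_one_sModEq {ι : Type*} (s : Finset ι)
    {u : ι → MvPowerSeries σ R} (hu : ∀ i ∈ s, constantCoeff (u i) = 0) (N : ℕ) :
    truncLog N (∏ i ∈ s, (1 + u i) - 1) ≡ ∑ i ∈ s, truncLog N (u i)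
      [SMOD coeffVanishingIdeal (degreeLE N)] := by
  classical
  induction s using Finset.induction_on with
  | empty => rw [prod_empty, sub_self, sum_empty, truncLog_zero]
  | insert i s hi ih =>
    set P := ∏ j ∈ s, (1 + u j)
    have hP : constantCoeff (P - 1) = 0 := by
      rw [map_sub, map_prod, map_one, sub_eq_zero]
      exact prod_eq_one fun j hj => by rw [map_add, map_one, hu j (mem_insert_of_mem hj), add_zero]
    calc truncLog N (∏ j ∈ insert i s, (1 + u j) - 1)
        = truncLog N (u i + (P - 1) + u i * (P - 1)) := by rw [prod_insert hi]; congr 1; ring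
      _ ≡ truncLog N (u i) + truncLog N (P - 1) [SMOD coeffVanishingIdeal (degreeLE N)] :=
          truncLog_add_add_mul_sModEq (hu i (mem_insert_self i s)) hP N
      _ ≡ truncLog N (u i) + ∑ j ∈ s, truncLog N (u j)
          [SMOD coeffVanishingIdeal (degreeLE N)] :=
          SModEq.rfl.add (ih fun j hj => hu j (mem_insert_of_mem hj))
      _ = ∑ j ∈ insert i s, truncLog N (u j) := by rw [sum_insert hi]

theorem coeff_truncLog_neg_monomial [DecidableEq σ] (N : ℕ) (I M : σ →₀ ℕ) (c : R) :
    coeff M (truncLog N (-monomial I c)) =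
      ∑ k ∈ Icc 1 N, if k • I = M then -(k : ℚ)⁻¹ • c ^ k else 0 := by
  rw [truncLog, map_sum]
  refine sum_congr rfl fun k _ => ?_
  rw [map_rat_smul, ← map_neg, monomial_pow, coeff_monomial]
  split_ifs with h h' h'
  · have hsign : (-1 : ℚ) ^ (k + 1) / k * (-1) ^ k = -(k : ℚ)⁻¹ := by
      rw [div_mul_eq_mul_div, ← pow_add, Odd.neg_one_pow ⟨k, by ring⟩, neg_div, one_div]
    rw [neg_pow c, Algebra.smul_def, Algebra.smul_def, ← mul_assoc, ← hsign, map_mul,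
      map_pow (algebraMap ℚ R), map_neg, map_one]
  · exact absurd h.symm h'
  · exact absurd h'.symm h
  · exact smul_zero _

end RatAlgebra

end MvPowerSeries

open MvPowerSeries

section WittFactorProd

variable {n : ℕ} {B : Type*} [CommRing B]

theorem wittFactorProd_sModEq_prod (a : (Fin n →₀ ℕ) → B) (M : Fin n →₀ ℕ) :
    wittFactorProd a ≡ ∏ I ∈ (Iic M).erase 0, (1 - monomial I (a I))
      [SMOD coeffVanishingIdeal (LowerSet.Iic M)] := by
  refine SModEq.sub_mem.mpr fun J hJ => ?_
  rw [LowerSet.mem_Iic_iff] at hJ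
  have hsub : (Iic J).erase 0 ⊆ (Iic M).erase 0 := erase_subset_erase _ (Iic_subset_Iic.mpr hJ)
  have hfactor : ∀ I ∈ (Iic M).erase 0 \ (Iic J).erase 0,
      1 - monomial I (a I) ≡ 1 [SMOD coeffVanishingIdeal (LowerSet.Iic J)] := fun I hI =>
    one_sub_monomial_sModEq_one (fun hIJ => (mem_sdiff.mp hI).2
      (mem_erase.mpr ⟨ne_of_mem_erase (mem_sdiff.mp hI).1, mem_Iic.mpr hIJ⟩)) (a I)
  have hrest := SModEq.prod hfactor
  rw [prod_const_one] at hrest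
  rw [map_sub, sub_eq_zero, ← prod_sdiff hsub,
    coeff_eq_of_sModEq (hrest.mul SModEq.rfl) (LowerSet.mem_Iic_iff.mpr le_rfl), one_mul]
  rfl

theorem mgcd_nsmul (k : ℕ) (J : Fin n →₀ ℕ) : mgcd (k • J) = k * mgcd J := by
  simp only [mgcd, Finsupp.smul_apply, smul_eq_mul, Finset.gcd_mul_left, normalize_eq]

theorem mgcd_ne_zero {J : Fin n →₀ ℕ} (hJ : J ≠ 0) : mgcd J ≠ 0 :=
  fun h => hJ (Finsupp.ext fun i => gcd_eq_zero_iff.mp h i (mem_univ i))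

variable [Algebra ℚ B]

theorem coeff_mvLog (f : MvPowerSeries (Fin n) B) (M : Fin n →₀ ℕ) :
    coeff M (mvLog f) = coeff M (truncLog M.degree (f - 1)) := by
  simp only [truncLog, map_sum, map_rat_smul]
  rfl

theorem neg_inv_mgcd_smul_ghostMap (a : (Fin n →₀ ℕ) → B) {M : Fin n →₀ ℕ}
    (hM : M ≠ 0) :
    (-(mgcd M : ℚ)⁻¹) • ghostMap a M =
      ∑ I ∈ (Iic M).erase 0, ∑ k ∈ Icc 1 M.degree,
        if k • I = M then -(k : ℚ)⁻¹ • a I ^ k else 0 := by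
  have hzero : ∑ k ∈ Icc 1 M.degree,
      (if k • (0 : Fin n →₀ ℕ) = M then -(k : ℚ)⁻¹ • a 0 ^ k else 0) = 0 :=
    sum_eq_zero fun k _ => if_neg fun h => hM (by rw [← h, smul_zero])
  rw [sum_erase (Iic M) hzero, sum_comm, ghostMap, sum_filter, smul_sum, sum_product]
  refine sum_congr rfl fun k hkIcc => sum_congr rfl fun J _ => ?_
  split_ifs with h
  · have hJ : (mgcd J : ℚ) ≠ 0 :=
      Nat.cast_ne_zero.mpr (mgcd_ne_zero fun hJ => hM (by rw [← h, hJ, smul_zero]))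
    have hk : (k : ℚ) ≠ 0 :=
      Nat.cast_ne_zero.mpr (Nat.one_le_iff_ne_zero.mp (mem_Icc.mp hkIcc).1)
    rw [← h, mgcd_nsmul, ← nsmul_eq_mul, ← Nat.cast_smul_eq_nsmul ℚ, smul_smul]
    congr 1
    push_cast
    field_simp
  · exact smul_zero _

end WittFactorProd

/-- Over a `ℚ`-algebra `B`, the formal logarithm of `∏_{I ≠ 0} (1 - a_I t^I)` equals
`∑_{I ≠ 0} w_I(a) ⬝ (-t^I / gcd(I))`, where `w_I(a) = ∑_{kJ = I} gcd(J) a_J^k`. -/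
theorem mvLog_wittFactorProd {n : ℕ} {B : Type*} [CommRing B] [Algebra ℚ B]
    (a : (Fin n →₀ ℕ) → B) :
    mvLog (wittFactorProd a) =
      ((fun M => if M = 0 then 0 else (-((mgcd M : ℚ)⁻¹)) • ghostMap a M) :
        MvPowerSeries (Fin n) B) := by
  ext M
  rw [coeff_mvLog]
  rcases eq_or_ne M 0 with rfl | hM
  · rw [map_zero, truncLog, Icc_eq_empty_of_lt zero_lt_one, sum_empty, map_zero]
    rfl
  have hu : ∀ I ∈ (Iic M).erase 0, constantCoeff (-monomial I (a I)) = 0 := fun I hI => by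
    rw [← coeff_zero_eq_constantCoeff_apply, map_neg, coeff_monomial,
      if_neg (ne_of_mem_erase hI).symm, neg_zero]
  have hprod := (wittFactorProd_sModEq_prod a M).sub (SModEq.refl 1) |>.truncLog M.degree
  have hlog := truncLog_prod_one_add_sub_one_sModEq _ hu M.degree
  simp only [← sub_eq_add_neg] at hlog
  calc coeff M (truncLog M.degree (wittFactorProd a - 1))
      = coeff M (truncLog M.degree (∏ I ∈ (Iic M).erase 0, (1 - monomial I (a I)) - 1)) :=
        coeff_eq_of_sModEq hprod (LowerSet.mem_Iic_iff.mpr le_rfl)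
    _ = ∑ I ∈ (Iic M).erase 0, coeff M (truncLog M.degree (-monomial I (a I))) := by
        rw [← map_sum]
        exact coeff_eq_of_sModEq hlog (mem_degreeLE.mpr le_rfl)
    _ = if M = 0 then 0 else (-((mgcd M : ℚ)⁻¹)) • ghostMap a M := by
        simp only [coeff_truncLog_neg_monomial, if_neg hM, neg_inv_mgcd_smul_ghostMap a hM]
end

section
/- Let B be a commutative ring and n >= 1. The map sending a family (a_I) indexed by nonzero multi-indices I in Z_{\geq 0}^n to the power series product over I of (1 - a_I t^I) is a bijection onto the set of power series in B[[t_1,...,t_n]] with constant term 1. Consequently, transporting the multiplicative group structure on 1 + (t_1,...,t_n)B[[t]] along this bijection gives a group structure on families (a_I). -/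
/-!
Expanding the factor `1 - a_M t^M` last, the coefficient of `t^M` in `∏_{I ≠ 0} (1 - a_I t^I)`
is `c_M - a_M`, where `c_M` is the coefficient of `t^M` in the product over `0 < I < M` and so
depends only on the `a_I` with `I < M`. Hence the `a_M` are recovered from the product, and can be
chosen to match any series with constant term `1`, by well-founded recursion on `M`.
-/

open Finset

namespace MvPowerSeries

variable {σ R : Type*} [CommRing R]

theorem coeff_one_sub_monomial_mul (M : σ →₀ ℕ) (r : R) (P : MvPowerSeries σ R) :
    coeff M ((1 - monomial M r) * P) = coeff M P - r * constantCoeff P := by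
  rw [sub_mul, one_mul, map_sub, coeff_monomial_mul, if_pos le_rfl, tsub_self,
    coeff_zero_eq_constantCoeff_apply]

theorem constantCoeff_prod_one_sub_monomial (a : (σ →₀ ℕ) → R) {S : Finset (σ →₀ ℕ)}
    (hS : 0 ∉ S) : constantCoeff (∏ I ∈ S, (1 - monomial I (a I))) = 1 := by
  rw [map_prod]
  refine prod_eq_one fun I hI => ?_
  rw [map_sub, map_one, ← coeff_zero_eq_constantCoeff_apply,
    coeff_monomial_ne (ne_of_mem_of_not_mem hI hS).symm, sub_zero]

end MvPowerSeries

open MvPowerSeries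

section

variable {n : ℕ} {B : Type*} [CommRing B]

theorem constantCoeff_wittFactorProd (a : (Fin n →₀ ℕ) → B) :
    constantCoeff (wittFactorProd a) = 1 := by
  rw [← coeff_zero_eq_constantCoeff_apply]
  change coeff 0 (∏ I ∈ (Iic 0).erase 0, (1 - monomial I (a I))) = 1
  rw [coeff_zero_eq_constantCoeff_apply,
    constantCoeff_prod_one_sub_monomial a (notMem_erase 0 _)]

theorem coeff_wittFactorProd_of_ne_zero (a : (Fin n →₀ ℕ) → B) {M : Fin n →₀ ℕ} (hM : M ≠ 0) :
    coeff M (wittFactorProd a) = coeff M (∏ I ∈ Ioo 0 M, (1 - monomial I (a I))) - a M := by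
  have hsplit : (Iic M).erase 0 = insert M (Ioo 0 M) := by
    rw [Ioo_insert_right (pos_iff_ne_zero.2 hM)]
    ext I
    simp [pos_iff_ne_zero, and_comm]
  change coeff M (∏ I ∈ (Iic M).erase 0, (1 - monomial I (a I))) = _
  rw [hsplit, prod_insert (by simp), coeff_one_sub_monomial_mul,
    constantCoeff_prod_one_sub_monomial a (by simp), mul_one]

theorem wittFactorProd_injOn : Set.InjOn (wittFactorProd (n := n) (B := B)) {a | a 0 = 0} := by
  intro a ha b hb hab
  funext M
  induction M using WellFoundedLT.induction with
  | _ M ih =>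
    obtain rfl | hM := eq_or_ne M 0
    · rw [ha, hb]
    have hprod : ∏ I ∈ Ioo 0 M, (1 - monomial I (a I)) = ∏ I ∈ Ioo 0 M, (1 - monomial I (b I)) :=
      prod_congr rfl fun I hI => by rw [ih I (mem_Ioo.1 hI).2]
    have hcoeff := congrArg (coeff M) hab
    rwa [coeff_wittFactorProd_of_ne_zero a hM, coeff_wittFactorProd_of_ne_zero b hM, hprod,
      sub_right_inj] at hcoeff

noncomputable def wittFactors (f : MvPowerSeries (Fin n) B) : (Fin n →₀ ℕ) → B :=
  wellFounded_lt.fix fun M a =>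
    if M = 0 then 0 else
      coeff M (∏ I ∈ (Ioo 0 M).attach, (1 - monomial I.1 (a I.1 (mem_Ioo.1 I.2).2))) - coeff M f

theorem wittFactors_apply (f : MvPowerSeries (Fin n) B) (M : Fin n →₀ ℕ) :
    wittFactors f M = if M = 0 then 0 else
      coeff M (∏ I ∈ Ioo 0 M, (1 - monomial I (wittFactors f I))) - coeff M f := by
  rw [wittFactors, WellFounded.fix_eq, ← prod_attach (Ioo 0 M)]

theorem wittFactors_zero (f : MvPowerSeries (Fin n) B) : wittFactors f 0 = 0 := by
  rw [wittFactors_apply, if_pos rfl]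

theorem wittFactorProd_wittFactors {f : MvPowerSeries (Fin n) B} (hf : constantCoeff f = 1) :
    wittFactorProd (wittFactors f) = f := by
  ext M
  obtain rfl | hM := eq_or_ne M 0
  · rw [coeff_zero_eq_constantCoeff_apply, coeff_zero_eq_constantCoeff_apply,
      constantCoeff_wittFactorProd, hf]
  · conv_lhs => rw [coeff_wittFactorProd_of_ne_zero _ hM, wittFactors_apply, if_neg hM,
      sub_sub_cancel]

end

/-- The map sending a family `(a_I)` indexed by nonzero multi-indices (realized as the
families with `a_0 = 0`) to `∏_{I ≠ 0} (1 - a_I t^I)` is a bijection onto the set of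
power series in `B[[t_1,…,t_n]]` with constant term `1`; consequently multiplication of
such power series transports to a group operation on families: for any two families
there is a unique family whose product series is the product of their series. -/
theorem wittFactorProd_bijOn {n : ℕ} {B : Type*} [CommRing B] :
    Set.BijOn (wittFactorProd (n := n) (B := B)) {a | a 0 = 0}
      {f | MvPowerSeries.constantCoeff (σ := Fin n) (R := B) f = 1} ∧
    ∀ a b : (Fin n →₀ ℕ) → B, a 0 = 0 → b 0 = 0 →
      ∃! c : (Fin n →₀ ℕ) → B, c 0 = 0 ∧
        wittFactorProd c = wittFactorProd a * wittFactorProd b := by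
  have hbij : Set.BijOn (wittFactorProd (n := n) (B := B)) {a | a 0 = 0}
      {f | constantCoeff f = 1} :=
    ⟨fun a _ => constantCoeff_wittFactorProd a, wittFactorProd_injOn,
      fun f hf => ⟨wittFactors f, wittFactors_zero f, wittFactorProd_wittFactors hf⟩⟩
  refine ⟨hbij, fun a b _ _ => ?_⟩
  have hab : constantCoeff (wittFactorProd a * wittFactorProd b) = 1 := by
    rw [map_mul, constantCoeff_wittFactorProd, constantCoeff_wittFactorProd, mul_one]
  obtain ⟨c, hc, hFc⟩ := hbij.surjOn hab
  exact ⟨c, ⟨hc, hFc⟩, fun d hd => hbij.injOn hd.1 hc (hd.2.trans hFc.symm)⟩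
end
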